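/- arXiv:2003.04544 — 3 statements merged into one kernel-verified Lean document; each statement's English description precedes it below -/
import Mathlib

section
/- Consider minimizing max_i (γ_i + c_i/ρ_i) over ρ_i > 0 with ∑_{i=1}^n ρ_i ≤ 1, where c_i > 0 and γ_i ≥ 0. The optimum t* is the unique value with t* > max_i γ_i satisfying ∑_{i=1}^n c_i/(t* - γ_i) = 1, and it is attained exactly when all terms are equal: ρ_i = c_i/(t* - γ_i) for every i. -/
/-- Minimizing `max_i (γ_i + c_i/ρ_i)` over `ρ_i > 0` with `∑ ρ_i ≤ 1`: the optimum `t*`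
is the unique value with `t* > max_i γ_i` and `∑ c_i/(t* - γ_i) = 1`, attained exactly
when `ρ_i = c_i/(t* - γ_i)` for every `i` (all worker latencies equal `t*`). -/
theorem stmt_6 (n : ℕ) (hne : (Finset.univ : Finset (Fin n)).Nonempty)
    (c γ : Fin n → ℝ) (hc : ∀ i, 0 < c i) (hγ : ∀ i, 0 ≤ γ i)
    (tstar : ℝ) (htmax : ∀ i, γ i < tstar)
    (heq : ∑ i, c i / (tstar - γ i) = 1) :
    -- uniqueness of the root
    (∀ t : ℝ, (∀ i, γ i < t) → ∑ i, c i / (t - γ i) = 1 → t = tstar) ∧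
    -- the equalizing allocation is feasible and attains latency t* for every worker
    (∀ i, 0 < c i / (tstar - γ i)) ∧
    (∑ i, c i / (tstar - γ i) = 1) ∧
    (∀ i, γ i + c i / (c i / (tstar - γ i)) = tstar) ∧
    -- t* is the minimum, attained exactly at the equalizing allocation
    (∀ ρ : Fin n → ℝ, (∀ i, 0 < ρ i) → ∑ i, ρ i ≤ 1 →
      (tstar ≤ Finset.univ.sup' hne (fun i => γ i + c i / ρ i) ∧
        (Finset.univ.sup' hne (fun i => γ i + c i / ρ i) = tstar ↔
          ∀ i, ρ i = c i / (tstar - γ i)))) := by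
  have hsub : ∀ i, 0 < tstar - γ i := fun i => sub_pos.mpr (htmax i)
  have hpos : ∀ i, 0 < c i / (tstar - γ i) := fun i => div_pos (hc i) (hsub i)
  -- strict monotonicity helper
  have hmono : ∀ t : ℝ, (∀ i, γ i < t) → t < tstar →
      (1 : ℝ) < ∑ i, c i / (t - γ i) := by
    intro t ht htlt
    rw [← heq]
    apply Finset.sum_lt_sum_of_nonempty hne
    intro i _
    exact div_lt_div_of_pos_left (hc i) (sub_pos.mpr (ht i)) (by linarith [htmax i, ht i])
  have hmono' : ∀ t : ℝ, (∀ i, γ i < t) → tstar < t →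
      ∑ i, c i / (t - γ i) < 1 := by
    intro t ht htlt
    rw [← heq]
    apply Finset.sum_lt_sum_of_nonempty hne
    intro i _
    exact div_lt_div_of_pos_left (hc i) (hsub i) (by linarith [htmax i, ht i])
  have hkey : ∀ i, c i / (c i / (tstar - γ i)) = tstar - γ i := by
    intro i
    rw [div_div_eq_mul_div, mul_comm, mul_div_assoc, div_self (ne_of_gt (hc i)), mul_one]
  refine ⟨?_, hpos, heq, ?_, ?_⟩
  · intro t ht hsum
    by_contra hne'
    rcases lt_or_gt_of_ne hne' with h | h
    · exact absurd hsum (ne_of_gt (hmono t ht h))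
    · exact absurd hsum (ne_of_lt (hmono' t ht h))
  · intro i
    rw [hkey i]; ring
  · intro ρ hρ hsum
    set S := Finset.univ.sup' hne (fun i => γ i + c i / ρ i) with hS
    have hle : ∀ i, γ i + c i / ρ i ≤ S := fun i =>
      Finset.le_sup' (fun i => γ i + c i / ρ i) (Finset.mem_univ i)
    have hmain : tstar ≤ S := by
      by_contra h
      push_neg at h
      have : (1:ℝ) < ∑ i, ρ i := by
        rw [← heq]
        apply Finset.sum_lt_sum_of_nonempty hne
        intro i _
        have h1 : c i / ρ i < tstar - γ i := by linarith [hle i]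
        rw [div_lt_iff₀ (hρ i)] at h1
        rw [div_lt_iff₀ (hsub i)]
        linarith
      linarith
    refine ⟨hmain, ?_, ?_⟩
    · intro hSeq
      have hge : ∀ i, c i / (tstar - γ i) ≤ ρ i := by
        intro i
        have h1 : c i / ρ i ≤ tstar - γ i := by
          have := hle i; rw [hSeq] at this; linarith
        rw [div_le_iff₀ (hρ i)] at h1
        rw [div_le_iff₀ (hsub i)]
        linarith
      by_contra hall
      push_neg at hall
      obtain ⟨j, hj⟩ := hall
      have hjlt : c j / (tstar - γ j) < ρ j := lt_of_le_of_ne (hge j) (Ne.symm hj)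
      have : (1:ℝ) < ∑ i, ρ i := by
        rw [← heq]
        exact Finset.sum_lt_sum (fun i _ => hge i) ⟨j, Finset.mem_univ j, hjlt⟩
      linarith
    · intro hall
      rw [hS]
      apply le_antisymm _ hmain
      apply Finset.sup'_le
      intro i _
      rw [hall i, hkey i]; ring_nf; rfl
end

section
/- Let N*(t) = sup { ∑_{k=1}^K b_k : b_k ≥ 0, c_{k,n}·b_k < t - T_s - T_ph for all (k,n), and ∑_{k,n} A·b_k/((t - T_s - T_ph - c_{k,n}·b_k)·R_{k,n}) ≤ 1 }. Then N* is a strictly increasing function of t on (T_s + T_ph, ∞). -/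
set_option maxHeartbeats 1000000


/-- Lemma 3: the maximal feasible model size
`N*(t) = sup {∑_k b_k : b ≥ 0, c_{k,n}·b_k < t - T_s - T_ph, ∑_{k,n} ρ_{k,n}(b_k,t) ≤ 1}`
is strictly increasing in the round latency `t` on `(T_s + T_ph, ∞)`. -/
theorem stmt_12 (K : ℕ) (I : Type) [Fintype I] [Nonempty I]
    (g : I → Fin K) (hg : Function.Surjective g)
    (c R : I → ℝ) (hc : ∀ i, 0 < c i) (hR : ∀ i, 0 < R i)
    (A Ts Tph : ℝ) (hA : 0 < A) (hTs : 0 ≤ Ts) (hTph : 0 ≤ Tph) :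
    StrictMonoOn
      (fun t => sSup {s : ℝ | ∃ b : Fin K → ℝ,
        (∀ k, 0 ≤ b k) ∧
        (∀ i, c i * b (g i) < t - Ts - Tph) ∧
        (∑ i, A * b (g i) / ((t - Ts - Tph - c i * b (g i)) * R i) ≤ 1) ∧
        s = ∑ k, b k})
      (Set.Ioi (Ts + Tph)) := by
  intro t₁ ht₁ t₂ ht₂ hlt
  simp only [Set.mem_Ioi] at ht₁ ht₂
  dsimp only
  set τ₁ := t₁ - Ts - Tph with hτ₁def
  set τ₂ := t₂ - Ts - Tph with hτ₂def
  have hτ₁ : 0 < τ₁ := by rw [hτ₁def]; linarith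
  have hτ₂ : 0 < τ₂ := by rw [hτ₂def]; linarith
  have hττ : τ₁ < τ₂ := by rw [hτ₁def, hτ₂def]; linarith
  obtain ⟨i₀⟩ := ‹Nonempty I›
  have hK : 0 < K := (g i₀).pos
  set Δ := (τ₂ - τ₁) / 2 with hΔdef
  have hΔ : 0 < Δ := by rw [hΔdef]; linarith
  have hτ2eq : τ₂ = τ₁ + 2 * Δ := by rw [hΔdef]; ring
  have hune : (Finset.univ : Finset I).Nonempty := Finset.univ_nonempty
  set cmax := Finset.univ.sup' hune c with hcmaxdef
  have hcmax : 0 < cmax := lt_of_lt_of_le (hc i₀) (Finset.le_sup' c (Finset.mem_univ i₀))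
  have hcle : ∀ i, c i ≤ cmax := fun i => Finset.le_sup' c (Finset.mem_univ i)
  set Sden := ∑ i : I, A / (Δ * R i) with hSdef
  have hS : 0 < Sden := Finset.sum_pos (fun i _ => by
    have := hR i; positivity) hune
  set ε := min (Δ / cmax) ((Δ / τ₂) / Sden) with hεdef
  have hε : 0 < ε := lt_min (by positivity) (by positivity)
  have hεc : ∀ i, c i * ε ≤ Δ := by
    intro i
    have h1 : ε ≤ Δ / cmax := min_le_left _ _
    calc c i * ε ≤ cmax * (Δ / cmax) :=
          mul_le_mul (hcle i) h1 hε.le hcmax.le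
      _ = Δ := by field_simp
  have hεS : ε * Sden ≤ Δ / τ₂ := by
    have h1 : ε ≤ (Δ / τ₂) / Sden := min_le_right _ _
    calc ε * Sden ≤ ((Δ / τ₂) / Sden) * Sden := by nlinarith
      _ = Δ / τ₂ := by field_simp
  -- key step: bump a feasible point
  have key : ∀ b : Fin K → ℝ, (∀ k, 0 ≤ b k) → (∀ i, c i * b (g i) < τ₁) →
      (∑ i, A * b (g i) / ((τ₁ - c i * b (g i)) * R i) ≤ 1) →
      (∀ i, c i * (b (g i) + ε) < τ₂) ∧
      (∑ i, A * (b (g i) + ε) / ((τ₂ - c i * (b (g i) + ε)) * R i) ≤ 1) := by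
    intro b hb0 hbc hbsum
    have hd : ∀ i, 0 < τ₁ - c i * b (g i) := fun i => by linarith [hbc i]
    constructor
    · intro i
      have h1 := hεc i
      have h2 := hbc i
      have h3 : c i * (b (g i) + ε) = c i * b (g i) + c i * ε := mul_add _ _ _
      rw [hτ2eq]; linarith
    · have hterm : ∀ i ∈ (Finset.univ : Finset I),
          A * (b (g i) + ε) / ((τ₂ - c i * (b (g i) + ε)) * R i)
          ≤ (τ₁ / (τ₁ + Δ)) * (A * b (g i) / ((τ₁ - c i * b (g i)) * R i))
            + ε * (A / (Δ * R i)) := by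
        intro i _
        set x := b (g i) with hxdef
        have hx : 0 ≤ x := hb0 _
        have hd1 : 0 < τ₁ - c i * x := hd i
        have hRi := hR i
        have hexp : c i * (x + ε) = c i * x + c i * ε := mul_add _ _ _
        have hD : (τ₁ - c i * x + Δ) ≤ τ₂ - c i * (x + ε) := by
          have h1 := hεc i
          rw [hτ2eq, hexp]; linarith
        have hDpos : 0 < τ₁ - c i * x + Δ := by linarith
        have stepA : A * (x + ε) / ((τ₂ - c i * (x + ε)) * R i)
            ≤ A * (x + ε) / ((τ₁ - c i * x + Δ) * R i) := by
          gcongr <;> positivity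
        have stepB : A * (x + ε) / ((τ₁ - c i * x + Δ) * R i)
            = A * x / ((τ₁ - c i * x + Δ) * R i)
              + A * ε / ((τ₁ - c i * x + Δ) * R i) := by
          rw [← add_div]; ring_nf
        have stepC : A * x / ((τ₁ - c i * x + Δ) * R i)
            ≤ τ₁ / (τ₁ + Δ) * (A * x / ((τ₁ - c i * x) * R i)) := by
          rw [div_mul_div_comm, div_le_div_iff₀ (by positivity) (by positivity)]
          nlinarith [mul_nonneg (mul_nonneg (mul_nonneg (mul_nonneg hA.le hRi.le) hx) hΔ.le)
            (mul_nonneg (hc i).le hx)]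
        have stepD : A * ε / ((τ₁ - c i * x + Δ) * R i) ≤ ε * (A / (Δ * R i)) := by
          have : ε * (A / (Δ * R i)) = A * ε / (Δ * R i) := by
            field_simp
          rw [this]
          gcongr
          linarith
        calc A * (x + ε) / ((τ₂ - c i * (x + ε)) * R i)
            ≤ A * x / ((τ₁ - c i * x + Δ) * R i)
              + A * ε / ((τ₁ - c i * x + Δ) * R i) := by rw [← stepB]; exact stepA
          _ ≤ τ₁ / (τ₁ + Δ) * (A * x / ((τ₁ - c i * x) * R i)) + ε * (A / (Δ * R i)) :=
              add_le_add stepC stepD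
      calc ∑ i, A * (b (g i) + ε) / ((τ₂ - c i * (b (g i) + ε)) * R i)
          ≤ ∑ i, ((τ₁ / (τ₁ + Δ)) * (A * b (g i) / ((τ₁ - c i * b (g i)) * R i))
              + ε * (A / (Δ * R i))) := Finset.sum_le_sum hterm
        _ = (τ₁ / (τ₁ + Δ)) * (∑ i, A * b (g i) / ((τ₁ - c i * b (g i)) * R i))
              + ε * Sden := by
            rw [Finset.sum_add_distrib, ← Finset.mul_sum, ← Finset.mul_sum, hSdef]
        _ ≤ (τ₁ / (τ₁ + Δ)) * 1 + Δ / τ₂ := by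
            have h1 : 0 ≤ τ₁ / (τ₁ + Δ) := by positivity
            have h2 := mul_le_mul_of_nonneg_left hbsum h1
            linarith
        _ ≤ 1 := by
            rw [mul_one, div_add_div _ _ (by positivity : (τ₁ + Δ) ≠ 0)
              (by positivity : τ₂ ≠ 0), div_le_one (by positivity)]
            nlinarith
  -- bounded above at t₂
  set Rmax := Finset.univ.sup' hune R with hRmaxdef
  have hRle : ∀ i, R i ≤ Rmax := fun i => Finset.le_sup' R (Finset.mem_univ i)
  have hbdd : BddAbove {s : ℝ | ∃ b : Fin K → ℝ,
      (∀ k, 0 ≤ b k) ∧ (∀ i, c i * b (g i) < τ₂) ∧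
      (∑ i, A * b (g i) / ((τ₂ - c i * b (g i)) * R i) ≤ 1) ∧ s = ∑ k, b k} := by
    refine ⟨K * (τ₂ * Rmax / A), ?_⟩
    rintro s ⟨b, hb0, hbc, hbsum, rfl⟩
    have hbk : ∀ k, b k ≤ τ₂ * Rmax / A := by
      intro k
      obtain ⟨i, rfl⟩ := hg k
      have hnn : ∀ j ∈ (Finset.univ : Finset I),
          0 ≤ A * b (g j) / ((τ₂ - c j * b (g j)) * R j) := by
        intro j _
        have h1 : 0 < τ₂ - c j * b (g j) := by linarith [hbc j]
        have h2 := hR j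
        have h3 := hb0 (g j)
        positivity
      have h1 : A * b (g i) / ((τ₂ - c i * b (g i)) * R i) ≤ 1 :=
        le_trans (Finset.single_le_sum hnn (Finset.mem_univ i)) hbsum
      have hden : 0 < (τ₂ - c i * b (g i)) * R i := by
        have := hR i; have := hbc i; nlinarith
      rw [div_le_one hden] at h1
      rw [le_div_iff₀ hA]
      have hcb : 0 ≤ c i * b (g i) := mul_nonneg (hc i).le (hb0 _)
      have p0 : 0 ≤ c i * b (g i) * R i := mul_nonneg hcb (hR i).le
      have p1 : (τ₂ - c i * b (g i)) * R i ≤ τ₂ * R i := by nlinarith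
      have p2 : τ₂ * R i ≤ τ₂ * Rmax := mul_le_mul_of_nonneg_left (hRle i) hτ₂.le
      linarith
    calc ∑ k, b k ≤ ∑ _k : Fin K, (τ₂ * Rmax / A) :=
          Finset.sum_le_sum (fun k _ => hbk k)
      _ = K * (τ₂ * Rmax / A) := by
          rw [Finset.sum_const, Finset.card_univ, Fintype.card_fin, nsmul_eq_mul]
  -- nonempty at t₁
  have hne : {s : ℝ | ∃ b : Fin K → ℝ,
      (∀ k, 0 ≤ b k) ∧ (∀ i, c i * b (g i) < τ₁) ∧
      (∑ i, A * b (g i) / ((τ₁ - c i * b (g i)) * R i) ≤ 1) ∧ s = ∑ k, b k}.Nonempty := by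
    refine ⟨0, fun _ => 0, fun _ => le_refl 0, fun i => by simpa using hτ₁, ?_, by simp⟩
    simp
  -- conclude
  have hmap : ∀ s ∈ {s : ℝ | ∃ b : Fin K → ℝ,
      (∀ k, 0 ≤ b k) ∧ (∀ i, c i * b (g i) < τ₁) ∧
      (∑ i, A * b (g i) / ((τ₁ - c i * b (g i)) * R i) ≤ 1) ∧ s = ∑ k, b k},
      s + K * ε ∈ {s : ℝ | ∃ b : Fin K → ℝ,
      (∀ k, 0 ≤ b k) ∧ (∀ i, c i * b (g i) < τ₂) ∧
      (∑ i, A * b (g i) / ((τ₂ - c i * b (g i)) * R i) ≤ 1) ∧ s = ∑ k, b k} := by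
    rintro s ⟨b, hb0, hbc, hbsum, rfl⟩
    obtain ⟨h1, h2⟩ := key b hb0 hbc hbsum
    refine ⟨fun k => b k + ε, fun k => add_nonneg (hb0 k) hε.le, h1, h2, ?_⟩
    rw [Finset.sum_add_distrib, Finset.sum_const, Finset.card_univ, Fintype.card_fin,
      nsmul_eq_mul]
  have hKε : 0 < (K : ℝ) * ε := by
    have : (0:ℝ) < K := Nat.cast_pos.mpr hK
    positivity
  have hle : sSup {s : ℝ | ∃ b : Fin K → ℝ,
      (∀ k, 0 ≤ b k) ∧ (∀ i, c i * b (g i) < τ₁) ∧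
      (∑ i, A * b (g i) / ((τ₁ - c i * b (g i)) * R i) ≤ 1) ∧ s = ∑ k, b k}
      ≤ sSup {s : ℝ | ∃ b : Fin K → ℝ,
      (∀ k, 0 ≤ b k) ∧ (∀ i, c i * b (g i) < τ₂) ∧
      (∑ i, A * b (g i) / ((τ₂ - c i * b (g i)) * R i) ≤ 1) ∧ s = ∑ k, b k} - K * ε := by
    apply csSup_le hne
    intro s hs
    have := le_csSup hbdd (hmap s hs)
    linarith
  linarith
end

section
/- Let h : (α, ∞) → ℝ be defined by h(t) = ∑_{k=1}^K (t - α)/β_k - N with β_k > 0, N > 0, α ≥ 0. Then h has a unique zero t*, and for the allocation b_k = (t* - α)/β_k the following hold simultaneously: (i) b_k > 0 for all k, (ii) ∑_k b_k = N, and (iii) max_k (α + β_k·b_k) = t* ≤ max_k (α + β_k·b_k') for every other nonnegative allocation (b_k') with ∑_k b_k' = N. -/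
/-- Complete optimality statement for Theorem 1: `h(t) = ∑ (t-α)/β_k - N` has a unique
zero `t* > α`, and the equalizing allocation `b_k = (t* - α)/β_k` is (i) positive,
(ii) sums to `N`, and (iii) achieves maximum group latency `t*`, which is minimal among
all nonnegative allocations summing to `N`. -/
theorem stmt_19 (K : ℕ) (hne : (Finset.univ : Finset (Fin K)).Nonempty)
    (α N : ℝ) (hα : 0 ≤ α) (hN : 0 < N)
    (β : Fin K → ℝ) (hβ : ∀ k, 0 < β k) :
    ∃ tstar : ℝ, α < tstar ∧
      (∑ k, (tstar - α) / β k - N = 0) ∧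
      (∀ t : ℝ, α < t → ∑ k, (t - α) / β k - N = 0 → t = tstar) ∧
      (∀ k, 0 < (tstar - α) / β k) ∧
      (∑ k, (tstar - α) / β k = N) ∧
      (Finset.univ.sup' hne (fun k => α + β k * ((tstar - α) / β k)) = tstar) ∧
      (∀ b' : Fin K → ℝ, (∀ k, 0 ≤ b' k) → ∑ k, b' k = N →
        tstar ≤ Finset.univ.sup' hne (fun k => α + β k * b' k)) := by
  set S : ℝ := ∑ k, (β k)⁻¹ with hS
  have hSpos : 0 < S := by
    apply Finset.sum_pos (fun k _ => inv_pos.mpr (hβ k)) hne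
  refine ⟨α + N / S, by nlinarith [div_pos hN hSpos], ?_, ?_, ?_, ?_, ?_, ?_⟩
  · have : ∑ k, (α + N / S - α) / β k = N := by
      simp only [add_sub_cancel_left, div_eq_mul_inv, ← Finset.mul_sum, ← hS]
      field_simp
    linarith
  · intro t ht heq
    have hsum : ∑ k, (t - α) / β k = (t - α) * S := by
      simp only [div_eq_mul_inv, ← Finset.mul_sum, ← hS]
    rw [hsum] at heq
    have : t - α = N / S := by
      field_simp
      linarith
    linarith [this]
  · intro k
    have : (0:ℝ) < α + N / S - α := by nlinarith [div_pos hN hSpos]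
    exact div_pos this (hβ k)
  · simp only [add_sub_cancel_left, div_eq_mul_inv, ← Finset.mul_sum, ← hS]
    field_simp
  · have heq : ∀ k : Fin K, α + β k * ((α + N / S - α) / β k) = α + N / S := by
      intro k
      rw [mul_div_cancel₀ _ (hβ k).ne']; ring
    simp only [heq]
    exact Finset.sup'_const hne _
  · intro b' hb' hsum
    by_contra h
    push_neg at h
    have hall : ∀ k : Fin K, α + β k * b' k < α + N / S := by
      intro k
      exact lt_of_le_of_lt (Finset.le_sup' (fun k => α + β k * b' k) (Finset.mem_univ k)) h
    have hlt : ∀ k : Fin K, b' k < (N / S) / β k := by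
      intro k
      have := hall k
      have hb := hβ k
      rw [lt_div_iff₀ hb, mul_comm]
      linarith
    have : ∑ k, b' k < ∑ k, (N / S) / β k := Finset.sum_lt_sum_of_nonempty hne (fun k _ => hlt k)
    rw [hsum] at this
    have hNS : ∑ k, (N / S) / β k = N := by
      simp only [div_eq_mul_inv, ← Finset.mul_sum, ← hS]
      field_simp
    linarith
end
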